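/- arXiv:2402.02697 — 3 statements merged into one kernel-verified Lean document; each statement's English description precedes it below -/
import Mathlib

section
/- Let f : ℝ → ℝ be twice continuously differentiable and suppose there exist constants C > 0 and k ∈ ℕ such that |f(x)| + |f'(x)| + |f''(x)| ≤ C(1 + |x|)^k for all x ∈ ℝ. Then for every t > 0 the function t ↦ E[f(√t · ξ)] is differentiable at t, with derivative (d/dt) E[f(√t · ξ)] = (1/2) · E[f''(√t · ξ)]. -/
open MeasureTheory ProbabilityTheory Real Filter Set
open scoped ENNReal NNReal


lemma phi_eq (x : ℝ) : gaussianPDFReal 0 1 x = (Real.sqrt (2 * π))⁻¹ * Real.exp (-x^2/2) := by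
  simp [gaussianPDFReal]

lemma phi_deriv (x : ℝ) : HasDerivAt (gaussianPDFReal 0 1) (-x * gaussianPDFReal 0 1 x) x := by
  have h1 : HasDerivAt (fun x : ℝ => -x^2/2) (-x) x := by
    have := ((hasDerivAt_pow 2 x).neg).div_const 2
    simpa using this.congr_deriv (by ring)
  have h2 := (h1.exp).const_mul (Real.sqrt (2 * π))⁻¹
  have h3 : HasDerivAt (fun y : ℝ => (Real.sqrt (2 * π))⁻¹ * Real.exp (-y^2/2))
      (-x * ((Real.sqrt (2 * π))⁻¹ * Real.exp (-x^2/2))) x := h2.congr_deriv (by ring)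
  rw [show gaussianPDFReal 0 1 = fun y : ℝ => (Real.sqrt (2 * π))⁻¹ * Real.exp (-y^2/2)
    from funext phi_eq]
  exact h3

lemma bdd_of_tendsto_cocompact {h : ℝ → ℝ} (hc : Continuous h)
    (ht : Tendsto h (cocompact ℝ) (nhds 0)) : ∃ K, ∀ x, h x ≤ K := by
  have h1 : ∀ᶠ x in cocompact ℝ, |h x| < 1 := by
    have := ht.eventually (eventually_abs_sub_lt 0 one_pos)
    simpa using this
  rw [Filter.hasBasis_cocompact.eventually_iff] at h1
  obtain ⟨s, hs, hout⟩ := h1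
  obtain ⟨B, hB⟩ := hs.exists_bound_of_continuousOn hc.continuousOn
  refine ⟨max B 1, fun x => ?_⟩
  by_cases hx : x ∈ s
  · exact le_trans (le_trans (le_abs_self _) (by simpa using hB x hx)) (le_max_left _ _)
  · exact le_trans (le_trans (le_abs_self _) (hout hx).le) (le_max_right _ _)

lemma poly_le (m : ℕ) (x : ℝ) : (1+|x|)^m ≤ 2^m * (1 + |x|^m) := by
  have h1 : (1+|x|) ≤ 2 * max 1 |x| := by
    rcases le_total 1 |x| with h | h
    · rw [max_eq_right h]; linarith
    · rw [max_eq_left h]; linarith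
  calc (1+|x|)^m ≤ (2 * max 1 |x|)^m := pow_le_pow_left₀ (by positivity) h1 m
    _ = 2^m * (max 1 |x|)^m := mul_pow _ _ _
    _ ≤ 2^m * (1 + |x|^m) := by
        gcongr
        rcases le_total 1 |x| with h | h
        · rw [max_eq_right h]; have := pow_le_pow_left₀ (by positivity) h m; nlinarith [pow_nonneg (abs_nonneg x) m]
        · rw [max_eq_left h, one_pow]; nlinarith [pow_nonneg (abs_nonneg x) m]

lemma poly_gauss_tendsto (m : ℕ) {b : ℝ} (hb : 0 < b) :
    Tendsto (fun x : ℝ => (1+|x|)^m * Real.exp (-b * x^2)) (cocompact ℝ) (nhds 0) := by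
  have t0 := tendsto_rpow_abs_mul_exp_neg_mul_sq_cocompact hb 0
  have tm := tendsto_rpow_abs_mul_exp_neg_mul_sq_cocompact hb (m : ℝ)
  have hsum := ((t0.const_mul ((2:ℝ)^m)).add (tm.const_mul ((2:ℝ)^m)))
  rw [mul_zero, add_zero] at hsum
  refine squeeze_zero (fun x => by positivity) (fun x => ?_) hsum
  have h1 : (1+|x|)^m * Real.exp (-b * x^2) ≤ 2^m * (1 + |x|^m) * Real.exp (-b * x^2) := by
    gcongr; exact poly_le m x
  refine h1.trans (le_of_eq ?_)
  rw [Real.rpow_natCast, Real.rpow_zero]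
  ring

lemma integrable_poly_gauss (m : ℕ) :
    Integrable (fun x : ℝ => (1+|x|)^m * Real.exp (-x^2/2)) := by
  obtain ⟨K, hK⟩ := bdd_of_tendsto_cocompact
    (h := fun x => (1+|x|)^m * Real.exp (-(1/4 : ℝ) * x^2)) (by fun_prop)
    (poly_gauss_tendsto m (by norm_num))
  refine Integrable.mono' ((integrable_exp_neg_mul_sq (b := (1/4:ℝ)) (by norm_num)).const_mul K)
    (((continuous_const.add continuous_abs).pow m).mul (Real.continuous_exp.comp (by fun_prop))).aestronglyMeasurable ?_
  filter_upwards with x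
  have : Real.exp (-x^2/2) = Real.exp (-(1/4 : ℝ) * x^2) * Real.exp (-(1/4 : ℝ) * x^2) := by
    rw [← Real.exp_add]; ring_nf
  rw [Real.norm_eq_abs, abs_of_nonneg (by positivity), this, ← mul_assoc]
  have := hK x
  have he : (0:ℝ) < Real.exp (-(1/4 : ℝ) * x^2) := Real.exp_pos _
  nlinarith [pow_nonneg (by positivity : (0:ℝ) ≤ 1 + |x|) m]


lemma gauss_withDensity : gaussianReal 0 1 =
    (volume : Measure ℝ).withDensity (fun x => ((gaussianPDFReal 0 1 x).toNNReal : ℝ≥0∞)) := by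
  rw [gaussianReal_of_var_ne_zero 0 one_ne_zero]
  rfl

lemma smul_eq_pdf_mul (g : ℝ → ℝ) (x : ℝ) :
    (gaussianPDFReal 0 1 x).toNNReal • g x = gaussianPDFReal 0 1 x * g x := by
  rw [NNReal.smul_def, Real.coe_toNNReal _ (gaussianPDFReal_nonneg 0 1 x), smul_eq_mul]

lemma integral_gauss_eq (g : ℝ → ℝ) :
    ∫ x, g x ∂(gaussianReal 0 1) = ∫ x, gaussianPDFReal 0 1 x * g x := by
  rw [gauss_withDensity, integral_withDensity_eq_integral_smul
    ((measurable_gaussianPDFReal 0 1).real_toNNReal)]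
  congr 1; funext x; exact smul_eq_pdf_mul g x

lemma integrable_gauss_iff {g : ℝ → ℝ} :
    Integrable g (gaussianReal 0 1) ↔ Integrable (fun x => gaussianPDFReal 0 1 x * g x) := by
  rw [gauss_withDensity, integrable_withDensity_iff_integrable_smul
    ((measurable_gaussianPDFReal 0 1).real_toNNReal)]
  constructor <;> intro h <;> refine h.congr ?_ <;>
    · filter_upwards with x
      rw [← smul_eq_pdf_mul g x]



lemma phi_cont : Continuous (gaussianPDFReal 0 1) := by
  rw [show gaussianPDFReal 0 1 = fun x : ℝ => (Real.sqrt (2*π))⁻¹ * Real.exp (-x^2/2)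
    from funext phi_eq]
  fun_prop

lemma integrable_vol_of_poly {h : ℝ → ℝ} (hc : Continuous h) (A : ℝ) (m : ℕ)
    (hb : ∀ x, |h x| ≤ A * (1+|x|)^m) :
    Integrable (fun x => gaussianPDFReal 0 1 x * h x) := by
  refine Integrable.mono' ((integrable_poly_gauss m).const_mul (A * (Real.sqrt (2*π))⁻¹))
    (phi_cont.mul hc).aestronglyMeasurable ?_
  filter_upwards with x
  have h0 := gaussianPDFReal_nonneg 0 1 x
  rw [Real.norm_eq_abs, abs_mul, abs_of_nonneg h0]
  calc gaussianPDFReal 0 1 x * |h x| ≤ gaussianPDFReal 0 1 x * (A * (1+|x|)^m) :=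
        mul_le_mul_of_nonneg_left (hb x) h0
    _ = A * (Real.sqrt (2*π))⁻¹ * ((1+|x|)^m * Real.exp (-x^2/2)) := by rw [phi_eq]; ring

lemma integrable_gauss_of_poly {h : ℝ → ℝ} (hc : Continuous h) (A : ℝ) (m : ℕ)
    (hb : ∀ x, |h x| ≤ A * (1+|x|)^m) : Integrable h (gaussianReal 0 1) := by
  have : Integrable (fun x => gaussianPDFReal 0 1 x * h x) := integrable_vol_of_poly hc A m hb
  exact (by rw [@integrable_gauss_iff]; exact this)



lemma gauss_ibp {g g' : ℝ → ℝ} (hd : ∀ x, HasDerivAt g (g' x) x) (hg' : Continuous g')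
    (A : ℝ) (m : ℕ) (hg : ∀ x, |g x| ≤ A * (1+|x|)^m) (hgb : ∀ x, |g' x| ≤ A * (1+|x|)^m) :
    ∫ x, x * g x ∂(gaussianReal 0 1) = ∫ x, g' x ∂(gaussianReal 0 1) := by
  set φ := gaussianPDFReal 0 1 with hφ
  have gcont : Continuous g := continuous_iff_continuousAt.mpr fun x => (hd x).continuousAt
  set F : ℝ → ℝ := fun x => g x * φ x with hF_def
  set F' : ℝ → ℝ := fun x => φ x * g' x - φ x * (x * g x) with hF'_def
  have hF : ∀ x, HasDerivAt F (F' x) x := fun x =>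
    ((hd x).mul (phi_deriv x)).congr_deriv (by simp only [hF'_def]; ring)
  have bound2 : ∀ x : ℝ, |x * g x| ≤ A * (1+|x|)^(m+1) := by
    intro x
    rw [abs_mul]
    calc |x| * |g x| ≤ (1+|x|) * (A * (1+|x|)^m) := by
          refine mul_le_mul (by linarith [abs_nonneg x]) (hg x) (abs_nonneg _) (by positivity)
      _ = A * (1+|x|)^(m+1) := by ring
  have I1 : Integrable (fun x => φ x * g' x) := integrable_vol_of_poly hg' A m hgb
  have I2 : Integrable (fun x => φ x * (x * g x)) :=
    integrable_vol_of_poly (continuous_id.mul gcont) A (m+1) bound2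
  have IF' : Integrable F' := I1.sub I2
  -- F tends to 0 at both infinities
  have hDt : Tendsto (fun x : ℝ => A * (Real.sqrt (2*π))⁻¹ * ((1+|x|)^m
      * Real.exp (-(1/2 : ℝ) * x^2))) (cocompact ℝ) (nhds 0) := by
    simpa using (poly_gauss_tendsto m (by norm_num : (0:ℝ) < 1/2)).const_mul
      (A * (Real.sqrt (2*π))⁻¹)
  have hbound : ∀ x : ℝ, ‖F x‖ ≤ A * (Real.sqrt (2*π))⁻¹ *
      ((1+|x|)^m * Real.exp (-(1/2 : ℝ) * x^2)) := by
    intro x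
    have h0 : (0:ℝ) ≤ φ x := gaussianPDFReal_nonneg 0 1 x
    rw [Real.norm_eq_abs, hF_def, abs_mul, abs_of_nonneg h0]
    calc |g x| * φ x ≤ (A * (1+|x|)^m) * φ x := mul_le_mul_of_nonneg_right (hg x) h0
      _ = A * (Real.sqrt (2*π))⁻¹ * ((1+|x|)^m * Real.exp (-(1/2 : ℝ) * x^2)) := by
          rw [hφ, phi_eq]; ring_nf
  have hFcocompact : Tendsto F (cocompact ℝ) (nhds 0) := squeeze_zero_norm hbound hDt
  have htop : Tendsto F atTop (nhds 0) :=
    hFcocompact.mono_left (by rw [cocompact_eq_atBot_atTop]; exact le_sup_right)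
  have hbot : Tendsto F atBot (nhds 0) :=
    hFcocompact.mono_left (by rw [cocompact_eq_atBot_atTop]; exact le_sup_left)
  have EIoi : ∫ x in Ioi (0:ℝ), F' x = 0 - F 0 :=
    integral_Ioi_of_hasDerivAt_of_tendsto' (fun x _ => hF x) IF'.integrableOn htop
  have EIic : ∫ x in Iic (0:ℝ), F' x = F 0 - 0 :=
    integral_Iic_of_hasDerivAt_of_tendsto' (fun x _ => hF x) IF'.integrableOn hbot
  have Etot : ∫ x, F' x = 0 := by
    rw [← intervalIntegral.integral_Iic_add_Ioi IF'.integrableOn IF'.integrableOn, EIoi, EIic]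
    ring
  have hsub : ∫ x, F' x = (∫ x, φ x * g' x) - ∫ x, φ x * (x * g x) := integral_sub I1 I2
  rw [integral_gauss_eq, integral_gauss_eq, ← hφ]
  rw [Etot] at hsub
  linarith



lemma scaled_poly {a : ℝ} (ha : 0 ≤ a) (m : ℕ) (x : ℝ) :
    (1 + |a * x|)^m ≤ (1+a)^m * (1+|x|)^m := by
  rw [← mul_pow]
  refine pow_le_pow_left₀ (by positivity) ?_ m
  rw [abs_mul, abs_of_nonneg ha]
  nlinarith [abs_nonneg x]

/-- Differentiation under the Gaussian integral: for `f` twice continuously differentiable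
with polynomial growth (together with its first two derivatives), the map
`t ↦ E[f(√t ξ)]`, `ξ ~ N(0,1)`, is differentiable at every `t > 0`, with derivative
`(1/2) E[f''(√t ξ)]`. -/
theorem hasDerivAt_gaussian_integral_sqrt_scale
    (f : ℝ → ℝ) (hf : ContDiff ℝ 2 f)
    (C : ℝ) (k : ℕ) (hC : 0 < C)
    (hgrowth : ∀ x : ℝ, |f x| + |deriv f x| + |deriv (deriv f) x| ≤ C * (1 + |x|) ^ k)
    (t : ℝ) (ht : 0 < t) :
    HasDerivAt (fun s : ℝ => ∫ x, f (Real.sqrt s * x) ∂(gaussianReal 0 1))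
      ((1 / 2) * ∫ x, deriv (deriv f) (Real.sqrt t * x) ∂(gaussianReal 0 1)) t := by
  have st : 0 < Real.sqrt t := Real.sqrt_pos.mpr ht
  have st2 : 0 < Real.sqrt (2*t) := Real.sqrt_pos.mpr (by linarith)
  have sth : 0 < Real.sqrt (t/2) := Real.sqrt_pos.mpr (by linarith)
  have hb0 : ∀ x, |f x| ≤ C * (1+|x|)^k := fun x => by
    have := hgrowth x; have := abs_nonneg (deriv f x); have := abs_nonneg (deriv (deriv f) x)
    linarith
  have hb1 : ∀ x, |deriv f x| ≤ C * (1+|x|)^k := fun x => by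
    have := hgrowth x; have := abs_nonneg (f x); have := abs_nonneg (deriv (deriv f) x)
    linarith
  have hb2 : ∀ x, |deriv (deriv f) x| ≤ C * (1+|x|)^k := fun x => by
    have := hgrowth x; have := abs_nonneg (f x); have := abs_nonneg (deriv f x)
    linarith
  have hf2 : ContDiff ℝ ((1:ℕ) + 1) f := by exact_mod_cast hf
  have hf_diff : Differentiable ℝ f := hf.differentiable (by norm_num)
  have hf1 : ContDiff ℝ 1 (deriv f) := (contDiff_succ_iff_deriv.mp hf2).2.2
  have hf'_diff : Differentiable ℝ (deriv f) := hf1.differentiable one_ne_zero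
  have hf''_cont : Continuous (deriv (deriv f)) := hf1.continuous_deriv le_rfl
  set γ := gaussianReal 0 1 with hγ
  set F' : ℝ → ℝ → ℝ := fun s x => deriv f (Real.sqrt s * x) * (1 / (2 * Real.sqrt s) * x)
    with hF'
  -- the dominated differentiation
  have key := hasDerivAt_integral_of_dominated_loc_of_deriv_le (μ := γ)
      (F := fun s x => f (Real.sqrt s * x)) (F' := F') (x₀ := t)
      (bound := fun x => (C * (1 + Real.sqrt (2*t))^k * (1/(2*Real.sqrt (t/2)))) * (1+|x|)^(k+1))
      (Metric.ball_mem_nhds t (half_pos ht))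
      (Eventually.of_forall fun s =>
        (hf.continuous.comp (continuous_const.mul continuous_id)).aestronglyMeasurable)
      ?_ ?_ ?_ ?_ ?_
  · -- conclude
    have E : ∫ x, F' t x ∂γ
        = (1/2) * ∫ x, deriv (deriv f) (Real.sqrt t * x) ∂γ := by
      have e1 : ∫ x, F' t x ∂γ = (1/(2*Real.sqrt t)) * ∫ x, x * deriv f (Real.sqrt t * x) ∂γ := by
        rw [← integral_const_mul]
        congr 1; funext x; simp only [hF']; ring
      have hd : ∀ x, HasDerivAt (fun x => deriv f (Real.sqrt t * x))
          (deriv (deriv f) (Real.sqrt t * x) * Real.sqrt t) x := by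
        intro x
        have h1 : HasDerivAt (fun y : ℝ => Real.sqrt t * y) (Real.sqrt t) x := by
          simpa using (hasDerivAt_id x).const_mul (Real.sqrt t)
        exact (hf'_diff (Real.sqrt t * x)).hasDerivAt.comp x h1
      have hgc : Continuous fun x => deriv (deriv f) (Real.sqrt t * x) * Real.sqrt t :=
        (hf''_cont.comp (continuous_const.mul continuous_id)).mul continuous_const
      have hA1 : ∀ x, |deriv f (Real.sqrt t * x)| ≤ (C * (1+Real.sqrt t)^(k+1)) * (1+|x|)^k := by
        intro x
        have h1 : (1+Real.sqrt t)^k ≤ (1+Real.sqrt t)^(k+1) :=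
          pow_le_pow_right₀ (by linarith) (Nat.le_succ k)
        have h2 : (0:ℝ) ≤ (1+|x|)^k := by positivity
        calc |deriv f (Real.sqrt t * x)| ≤ C * (1 + |Real.sqrt t * x|)^k := hb1 _
          _ ≤ C * ((1+Real.sqrt t)^k * (1+|x|)^k) :=
              mul_le_mul_of_nonneg_left (scaled_poly st.le k x) hC.le
          _ = (C * (1+Real.sqrt t)^k) * (1+|x|)^k := by ring
          _ ≤ (C * (1+Real.sqrt t)^(k+1)) * (1+|x|)^k :=
              mul_le_mul_of_nonneg_right (mul_le_mul_of_nonneg_left h1 hC.le) h2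
      have hA2 : ∀ x, |deriv (deriv f) (Real.sqrt t * x) * Real.sqrt t|
          ≤ (C * (1+Real.sqrt t)^(k+1)) * (1+|x|)^k := by
        intro x
        rw [abs_mul, abs_of_nonneg st.le]
        have h2 : (0:ℝ) ≤ (1+|x|)^k := by positivity
        have h3 : (1+Real.sqrt t)^k * Real.sqrt t ≤ (1+Real.sqrt t)^(k+1) := by
          rw [pow_succ]
          exact mul_le_mul_of_nonneg_left (by linarith) (by positivity)
        calc |deriv (deriv f) (Real.sqrt t * x)| * Real.sqrt t
            ≤ (C * (1 + |Real.sqrt t * x|)^k) * Real.sqrt t :=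
              mul_le_mul_of_nonneg_right (hb2 _) st.le
          _ ≤ (C * ((1+Real.sqrt t)^k * (1+|x|)^k)) * Real.sqrt t :=
              mul_le_mul_of_nonneg_right
                (mul_le_mul_of_nonneg_left (scaled_poly st.le k x) hC.le) st.le
          _ = (C * ((1+Real.sqrt t)^k * Real.sqrt t)) * (1+|x|)^k := by ring
          _ ≤ (C * (1+Real.sqrt t)^(k+1)) * (1+|x|)^k :=
              mul_le_mul_of_nonneg_right (mul_le_mul_of_nonneg_left h3 hC.le) h2
      have stein := gauss_ibp hd hgc (C * (1+Real.sqrt t)^(k+1)) k hA1 hA2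
      rw [e1, hγ, stein]
      have e2 : ∫ x, deriv (deriv f) (Real.sqrt t * x) * Real.sqrt t ∂(gaussianReal 0 1)
          = Real.sqrt t * ∫ x, deriv (deriv f) (Real.sqrt t * x) ∂(gaussianReal 0 1) := by
        rw [← integral_const_mul]
        congr 1; funext x; ring
      rw [e2, ← mul_assoc]
      congr 1
      field_simp
    rw [← E]
    exact key.2
  · -- hF_int
    refine integrable_gauss_of_poly (hf.continuous.comp (continuous_const.mul continuous_id))
      (C * (1+Real.sqrt t)^k) k (fun x => ?_)
    calc |f (Real.sqrt t * x)| ≤ C * (1 + |Real.sqrt t * x|)^k := hb0 _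
      _ ≤ C * ((1+Real.sqrt t)^k * (1+|x|)^k) :=
          mul_le_mul_of_nonneg_left (scaled_poly st.le k x) hC.le
      _ = C * (1+Real.sqrt t)^k * (1+|x|)^k := by ring
  · -- hF'_meas
    exact ((hf1.continuous.comp (continuous_const.mul continuous_id)).mul
      (continuous_const.mul continuous_id)).aestronglyMeasurable
  · -- h_bound
    refine Eventually.of_forall fun x => fun s hs => ?_
    rw [Metric.mem_ball, Real.dist_eq, abs_lt] at hs
    have hs1 : t/2 < s := by linarith
    have hs2 : s < 2*t := by linarith
    have hss : 0 < Real.sqrt s := Real.sqrt_pos.mpr (by linarith)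
    have hmono1 : Real.sqrt s ≤ Real.sqrt (2*t) := Real.sqrt_le_sqrt hs2.le
    have hmono2 : Real.sqrt (t/2) ≤ Real.sqrt s := Real.sqrt_le_sqrt hs1.le
    have hinv : 1/(2*Real.sqrt s) ≤ 1/(2*Real.sqrt (t/2)) := by
      apply one_div_le_one_div_of_le (by linarith)
      linarith
    rw [Real.norm_eq_abs, hF']
    simp only
    rw [abs_mul, abs_mul, abs_of_nonneg (by positivity : (0:ℝ) ≤ 1/(2*Real.sqrt s))]
    have h1 : |deriv f (Real.sqrt s * x)| ≤ C * (1 + Real.sqrt (2*t))^k * (1+|x|)^k := by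
      have h2 : (1+Real.sqrt s)^k ≤ (1+Real.sqrt (2*t))^k :=
        pow_le_pow_left₀ (by positivity) (by linarith) k
      have h3 : (0:ℝ) ≤ (1+|x|)^k := by positivity
      calc |deriv f (Real.sqrt s * x)| ≤ C * (1 + |Real.sqrt s * x|)^k := hb1 _
        _ ≤ C * ((1+Real.sqrt s)^k * (1+|x|)^k) :=
            mul_le_mul_of_nonneg_left (scaled_poly hss.le k x) hC.le
        _ = (C * (1+Real.sqrt s)^k) * (1+|x|)^k := by ring
        _ ≤ C * (1 + Real.sqrt (2*t))^k * (1+|x|)^k :=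
            mul_le_mul_of_nonneg_right (mul_le_mul_of_nonneg_left h2 hC.le) h3
    have h2 : |x| ≤ 1 + |x| := by linarith [abs_nonneg x]
    calc |deriv f (Real.sqrt s * x)| * (1/(2*Real.sqrt s) * |x|)
        ≤ (C * (1 + Real.sqrt (2*t))^k * (1+|x|)^k) * (1/(2*Real.sqrt (t/2)) * (1+|x|)) := by
          refine mul_le_mul h1 ?_ (by positivity) (by positivity)
          refine mul_le_mul hinv h2 (abs_nonneg x) (by positivity)
      _ = (C * (1 + Real.sqrt (2*t))^k * (1/(2*Real.sqrt (t/2)))) * (1+|x|)^(k+1) := by ring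
  · -- bound integrable
    refine integrable_gauss_of_poly (by fun_prop)
      (C * (1 + Real.sqrt (2*t))^k * (1/(2*Real.sqrt (t/2)))) (k+1) (fun x => ?_)
    rw [abs_of_nonneg (by positivity)]
  · -- h_diff
    refine Eventually.of_forall fun x => fun s hs => ?_
    rw [Metric.mem_ball, Real.dist_eq, abs_lt] at hs
    have hs0 : 0 < s := by linarith
    have hsq : HasDerivAt (fun s' : ℝ => Real.sqrt s' * x) (1/(2*Real.sqrt s) * x) s :=
      (Real.hasDerivAt_sqrt hs0.ne').mul_const x
    exact (hf_diff (Real.sqrt s * x)).hasDerivAt.comp s hsq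
end

section
/- Let σ_a, σ_b ∈ ℝ with σ_b ≠ 0, let τ₀ > 0, and let φ : ℝ → ℝ be such that f := φ² is twice continuously differentiable with |f(x)| + |f'(x)| + |f''(x)| ≤ C(1 + |x|)^k for some C > 0, k ∈ ℕ and all x ∈ ℝ. Suppose there exists q ∈ [0,1) such that (σ_a²/2) · |E[f''(√t · ξ)]| ≤ q for all t > 0. Define T : [0,∞) → [0,∞) by T(t) = σ_a² E[φ(√t · ξ)²] + σ_b² τ₀². Then T is a contraction with Lipschitz constant q on [0,∞); it has a unique fixed point t* ∈ [0,∞), this fixed point satisfies t* ≥ σ_b² τ₀² > 0, and for every starting value t₀ ≥ 0 the iterates T^l(t₀) converge to t*. Consequently τ* := √t* is the unique τ > 0 satisfying τ² = σ_a² E[φ(τ ξ)²] + σ_b² τ₀². -/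
open MeasureTheory ProbabilityTheory Filter

namespace TauAux

noncomputable def p (x : ℝ) : ℝ := gaussianPDFReal 0 1 x

lemma p_nonneg (x : ℝ) : 0 ≤ p x := gaussianPDFReal_nonneg 0 1 x

lemma p_eq (x : ℝ) : p x = (Real.sqrt (2 * Real.pi))⁻¹ * Real.exp (- x ^ 2 / 2) := by
  simp [p, gaussianPDFReal]

lemma p_continuous : Continuous p := by
  have : p = fun x => (Real.sqrt (2 * Real.pi))⁻¹ * Real.exp (- x ^ 2 / 2) := funext p_eq
  rw [this]; continuity

lemma integral_eq (g : ℝ → ℝ) :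
    ∫ x, g x ∂(gaussianReal 0 1) = ∫ x, p x * g x := by
  rw [gaussianReal_of_var_ne_zero 0 one_ne_zero, gaussianPDF_def]
  simp_rw [ENNReal.ofReal]
  rw [integral_withDensity_eq_integral_smul (measurable_gaussianPDFReal 0 1).real_toNNReal g]
  congr 1; funext x
  rw [NNReal.smul_def, Real.coe_toNNReal _ (gaussianPDFReal_nonneg 0 1 x), smul_eq_mul]
  rfl

lemma integrable_iff (g : ℝ → ℝ) :
    Integrable g (gaussianReal 0 1) ↔ Integrable (fun x => p x * g x) := by
  rw [gaussianReal_of_var_ne_zero 0 one_ne_zero, gaussianPDF_def]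
  simp_rw [ENNReal.ofReal]
  rw [integrable_withDensity_iff_integrable_smul
    (measurable_gaussianPDFReal 0 1).real_toNNReal]
  have he : ∀ x : ℝ, (gaussianPDFReal 0 1 x).toNNReal • g x = p x * g x := by
    intro x
    rw [NNReal.smul_def, Real.coe_toNNReal _ (gaussianPDFReal_nonneg 0 1 x), smul_eq_mul]
    rfl
  constructor <;> intro h <;> refine h.congr (ae_of_all _ fun x => ?_)
  · exact he x
  · exact (he x).symm

lemma integrable_exp_mul_p (c : ℝ) : Integrable (fun x => Real.exp (c * x) * p x) := by
  have h : ∀ x : ℝ, Real.exp (c * x) * p x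
      = ((Real.sqrt (2 * Real.pi))⁻¹ * Real.exp (c ^ 2 / 2)) *
        Real.exp (-(1/2) * (x - c) ^ 2) := by
    intro x
    rw [p_eq, mul_comm (Real.exp (c * x)), mul_assoc, ← Real.exp_add, mul_assoc, ← Real.exp_add]
    congr 2
    ring
  rw [funext h]
  exact ((integrable_exp_neg_mul_sq (by norm_num : (0:ℝ) < 1/2)).comp_sub_right c).const_mul _

lemma integrable_poly_p (n : ℕ) : Integrable (fun x => (1 + |x|) ^ n * p x) := by
  have hsum : Integrable (fun x => Real.exp ((n:ℝ) * x) * p x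
      + Real.exp ((-(n:ℝ)) * x) * p x) :=
    (integrable_exp_mul_p _).add (integrable_exp_mul_p _)
  refine hsum.mono ?_ (ae_of_all _ fun x => ?_)
  · exact (((continuous_const.add continuous_abs).pow n).mul p_continuous).aestronglyMeasurable
  · have h1 : (1 + |x|) ≤ Real.exp |x| := by
      have := Real.add_one_le_exp |x|; linarith
    have h2 : (1 + |x|) ^ n ≤ Real.exp ((n:ℝ) * |x|) := by
      calc (1 + |x|) ^ n ≤ (Real.exp |x|) ^ n := by
            exact pow_le_pow_left₀ (by positivity) h1 n
        _ = Real.exp ((n:ℝ) * |x|) := by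
            rw [← Real.exp_nat_mul]
    have h3 : Real.exp ((n:ℝ) * |x|) ≤ Real.exp ((n:ℝ) * x) + Real.exp ((-(n:ℝ)) * x) := by
      rcases abs_cases x with ⟨hx, _⟩ | ⟨hx, _⟩
      · rw [hx]; nlinarith [Real.exp_pos ((-(n:ℝ)) * x)]
      · rw [hx]; rw [show ((n:ℝ) * -x) = (-(n:ℝ)) * x by ring]
        nlinarith [Real.exp_pos ((n:ℝ) * x)]
    have hp := p_nonneg x
    have hpow : (0:ℝ) ≤ (1 + |x|) ^ n := by positivity
    have e1 : ‖(1 + |x|) ^ n * p x‖ = (1 + |x|) ^ n * p x := by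
      rw [Real.norm_eq_abs, abs_of_nonneg (mul_nonneg hpow hp)]
    have e2 : ‖Real.exp ((n:ℝ) * x) * p x + Real.exp ((-(n:ℝ)) * x) * p x‖
        = Real.exp ((n:ℝ) * x) * p x + Real.exp ((-(n:ℝ)) * x) * p x := by
      rw [Real.norm_eq_abs, abs_of_nonneg (add_nonneg (mul_nonneg (Real.exp_pos _).le hp)
        (mul_nonneg (Real.exp_pos _).le hp))]
    rw [e1, e2]
    have := mul_le_mul_of_nonneg_right (h2.trans h3) hp
    linarith [this]

lemma integrable_p_mul_of_growth {g : ℝ → ℝ} (hg : Continuous g) {A : ℝ} {n : ℕ}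
    (hA : ∀ x, |g x| ≤ A * (1 + |x|) ^ n) :
    Integrable (fun x => p x * g x) := by
  refine ((integrable_poly_p n).const_mul A).mono
    ((p_continuous.mul hg).aestronglyMeasurable) (ae_of_all _ fun x => ?_)
  have hp := p_nonneg x
  have h1 := mul_le_mul_of_nonneg_left (hA x) hp
  have h2 : (0:ℝ) ≤ A * (1 + |x|) ^ n := le_trans (abs_nonneg _) (hA x)
  rw [Real.norm_eq_abs, Real.norm_eq_abs, abs_mul, abs_of_nonneg hp]
  calc p x * |g x| ≤ p x * (A * (1 + |x|) ^ n) := h1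
    _ = A * ((1 + |x|) ^ n * p x) := by ring
    _ ≤ |A * ((1 + |x|) ^ n * p x)| := le_abs_self _

lemma integrable_of_growth {g : ℝ → ℝ} (hg : Continuous g) {A : ℝ} {n : ℕ}
    (hA : ∀ x, |g x| ≤ A * (1 + |x|) ^ n) : Integrable g (gaussianReal 0 1) :=
  (integrable_iff g).2 (integrable_p_mul_of_growth hg hA)

lemma p_hasDeriv (x : ℝ) : HasDerivAt p (-x * p x) x := by
  have h1 : HasDerivAt (fun y : ℝ => -y ^ 2 / 2) (-x) x := by
    have := ((hasDerivAt_pow 2 x).neg.div_const 2)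
    refine this.congr_deriv ?_
    push_cast
    ring
  have h2 := (h1.exp).const_mul (Real.sqrt (2 * Real.pi))⁻¹
  have h3 : HasDerivAt (fun y => (Real.sqrt (2 * Real.pi))⁻¹ * Real.exp (- y ^ 2 / 2))
      (-x * ((Real.sqrt (2 * Real.pi))⁻¹ * Real.exp (- x ^ 2 / 2))) x := by
    refine h2.congr_deriv ?_; ring
  rw [p_eq]
  have hpe : p = fun y => (Real.sqrt (2 * Real.pi))⁻¹ * Real.exp (- y ^ 2 / 2) := funext p_eq
  rw [hpe]
  exact h3

end TauAux

namespace TauAux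

open MeasureTheory ProbabilityTheory Filter

set_option maxHeartbeats 1000000 in
lemma stein {g g' : ℝ → ℝ} (hder : ∀ x, HasDerivAt g (g' x) x)
    (hgc : Continuous g) (hg'c : Continuous g') {A : ℝ} {n : ℕ}
    (hgb : ∀ x, |g x| ≤ A * (1 + |x|) ^ n) (hgb' : ∀ x, |g' x| ≤ A * (1 + |x|) ^ n) :
    ∫ x, x * g x ∂(gaussianReal 0 1) = ∫ x, g' x ∂(gaussianReal 0 1) := by
  have hA0 : 0 ≤ A := by have := (abs_nonneg (g 0)).trans (hgb 0); simpa using this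
  have hxg : ∀ x : ℝ, |x * g x| ≤ A * (1 + |x|) ^ (n + 1) := by
    intro x
    rw [abs_mul, pow_succ]
    calc |x| * |g x| ≤ (1 + |x|) * (A * (1 + |x|) ^ n) := by
          apply mul_le_mul (by linarith [abs_nonneg x]) (hgb x) (abs_nonneg _) (by positivity)
      _ = A * ((1 + |x|) ^ n * (1 + |x|)) := by ring
  have hint1 : Integrable (fun x => p x * g' x) := integrable_p_mul_of_growth hg'c hgb'
  have hint2 : Integrable (fun x => p x * (x * g x)) :=
    integrable_p_mul_of_growth (continuous_id.mul hgc) hxg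
  set D : ℝ → ℝ := fun x => g' x * p x + g x * (-x * p x) with hD
  have hDder : ∀ x, HasDerivAt (fun y => g y * p y) (D x) x := fun x =>
    (hder x).mul (p_hasDeriv x)
  have hDcont : Continuous D := by
    apply Continuous.add
    · exact hg'c.mul p_continuous
    · exact hgc.mul ((continuous_id.neg).mul p_continuous)
  have hDeq : D = fun x => p x * g' x - p x * (x * g x) := by
    funext x; simp only [hD]; ring
  have hDint : Integrable D := by rw [hDeq]; exact hint1.sub hint2
  set c : ℝ := A * (Real.sqrt (2 * Real.pi))⁻¹ * Real.exp ((n:ℝ) ^ 2) with hc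
  have hHbound : ∀ x : ℝ, ‖g x * p x‖ ≤ c * Real.exp (-x ^ 2 / 4) := by
    intro x
    rw [Real.norm_eq_abs, abs_mul, abs_of_nonneg (p_nonneg x), p_eq]
    have h2 : (1 + |x|) ^ n ≤ Real.exp ((n:ℝ) * |x|) := by
      calc (1 + |x|) ^ n ≤ (Real.exp |x|) ^ n :=
            pow_le_pow_left₀ (by positivity) (by linarith [Real.add_one_le_exp |x|]) n
        _ = Real.exp ((n:ℝ) * |x|) := by rw [← Real.exp_nat_mul]
    have h3 : Real.exp ((n:ℝ) * |x|) * Real.exp (- x ^ 2 / 2)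
        ≤ Real.exp ((n:ℝ) ^ 2) * Real.exp (-x ^ 2 / 4) := by
      rw [← Real.exp_add, ← Real.exp_add]
      apply Real.exp_le_exp.2
      nlinarith [sq_nonneg (|x| / 2 - (n:ℝ)), sq_abs x]
    have hp' : (0:ℝ) < (Real.sqrt (2 * Real.pi))⁻¹ := by
      rw [inv_pos]; exact Real.sqrt_pos.2 (by positivity)
    calc |g x| * ((Real.sqrt (2 * Real.pi))⁻¹ * Real.exp (- x ^ 2 / 2))
        ≤ (A * (1 + |x|) ^ n) * ((Real.sqrt (2 * Real.pi))⁻¹ * Real.exp (- x ^ 2 / 2)) :=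
          mul_le_mul_of_nonneg_right (hgb x) (by positivity)
      _ ≤ (A * Real.exp ((n:ℝ) * |x|)) * ((Real.sqrt (2 * Real.pi))⁻¹ * Real.exp (- x ^ 2 / 2)) :=
          mul_le_mul_of_nonneg_right (mul_le_mul_of_nonneg_left h2 hA0) (by positivity)
      _ = (A * (Real.sqrt (2 * Real.pi))⁻¹) * (Real.exp ((n:ℝ) * |x|) * Real.exp (- x ^ 2 / 2)) := by
          ring
      _ ≤ (A * (Real.sqrt (2 * Real.pi))⁻¹) * (Real.exp ((n:ℝ) ^ 2) * Real.exp (-x ^ 2 / 4)) :=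
          mul_le_mul_of_nonneg_left h3 (by positivity)
      _ = c * Real.exp (-x ^ 2 / 4) := by rw [hc]; ring
  have hsq_top : Tendsto (fun x : ℝ => x ^ 2) atTop atTop := tendsto_pow_atTop two_ne_zero
  have hsq_bot : Tendsto (fun x : ℝ => x ^ 2) atBot atTop := by
    have := hsq_top.comp tendsto_abs_atBot_atTop
    simpa [Function.comp_def, sq_abs] using this
  have hexp_of : ∀ l : Filter ℝ, Tendsto (fun x : ℝ => x ^ 2) l atTop →
      Tendsto (fun x : ℝ => c * Real.exp (-x ^ 2 / 4)) l (nhds 0) := by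
    intro l hl
    have h1 : Tendsto (fun x : ℝ => -x ^ 2 / 4) l atBot := by
      have h2 := tendsto_neg_atTop_atBot.comp (hl.atTop_div_const (by norm_num : (0:ℝ) < 4))
      simpa [Function.comp_def, neg_div] using h2
    have h3 := Real.tendsto_exp_atBot.comp h1
    have h4 := h3.const_mul c
    simpa [Function.comp_def] using h4
  have htop : Tendsto (fun x : ℝ => g x * p x) atTop (nhds 0) :=
    squeeze_zero_norm hHbound (hexp_of atTop hsq_top)
  have hbot : Tendsto (fun x : ℝ => g x * p x) atBot (nhds 0) :=
    squeeze_zero_norm hHbound (hexp_of atBot hsq_bot)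
  have hinterval : ∀ R : ℝ, ∫ x in (-R)..R, D x = g R * p R - g (-R) * p (-R) := fun R =>
    intervalIntegral.integral_eq_sub_of_hasDerivAt (fun x _ => hDder x)
      (hDcont.intervalIntegrable _ _)
  have hlim1 : Tendsto (fun R : ℝ => ∫ x in (-R)..R, D x) atTop (nhds (∫ x, D x)) :=
    intervalIntegral_tendsto_integral hDint tendsto_neg_atTop_atBot tendsto_id
  have hlim2 : Tendsto (fun R : ℝ => ∫ x in (-R)..R, D x) atTop (nhds 0) := by
    have h5 := htop.sub (hbot.comp tendsto_neg_atTop_atBot)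
    rw [funext hinterval]
    simpa [Function.comp_def] using h5
  have hD0 : ∫ x, D x = 0 := tendsto_nhds_unique hlim1 hlim2
  rw [integral_eq, integral_eq]
  rw [hDeq, integral_sub hint1 hint2] at hD0
  linarith

lemma growth_prod_aux {a b : ℝ} (ha : 0 ≤ a) (hb : 0 ≤ b) (m : ℕ) :
    (1 + a * b) ^ m ≤ (1 + a) ^ m * (1 + b) ^ m := by
  rw [← mul_pow]
  apply pow_le_pow_left₀ (by positivity)
  nlinarith

end TauAux

namespace TauAux

open MeasureTheory ProbabilityTheory Filter

set_option maxHeartbeats 1000000 in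
lemma hasDerivAt_G {f : ℝ → ℝ} (hf1 : Differentiable ℝ f)
    (hf'c : Continuous (deriv f)) (hf2 : Differentiable ℝ (deriv f))
    (hf''c : Continuous (deriv (deriv f))) {C : ℝ} {k : ℕ} (hC : 0 < C)
    (hfb : ∀ x, |f x| ≤ C * (1 + |x|) ^ k)
    (hfb' : ∀ x, |deriv f x| ≤ C * (1 + |x|) ^ k)
    (hfb'' : ∀ x, |deriv (deriv f) x| ≤ C * (1 + |x|) ^ k)
    {u : ℝ} (hu : 0 < u) :
    HasDerivAt (fun t => ∫ x, f (Real.sqrt t * x) ∂(gaussianReal 0 1))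
      ((1/2) * ∫ x, deriv (deriv f) (Real.sqrt u * x) ∂(gaussianReal 0 1)) u := by
  have hcont_f : Continuous f := hf1.continuous
  set F' : ℝ → ℝ → ℝ := fun t x => deriv f (Real.sqrt t * x) * (1 / (2 * Real.sqrt t) * x)
    with hF'def
  have hsu : 0 < Real.sqrt u := Real.sqrt_pos.2 hu
  set B : ℝ := C * (1 + Real.sqrt (2 * u)) ^ k / (2 * Real.sqrt (u / 2)) with hB
  have hsu2 : 0 < Real.sqrt (u / 2) := Real.sqrt_pos.2 (by linarith)
  have hB0 : 0 ≤ B := by rw [hB]; positivity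
  have hball : ∀ t ∈ Metric.ball u (u / 2), u / 2 ≤ t ∧ t ≤ 2 * u := by
    intro t ht
    rw [Metric.mem_ball, Real.dist_eq] at ht
    have h := abs_lt.1 ht
    constructor <;> linarith [h.1, h.2]
  have habs : ∀ s x : ℝ, 0 ≤ s → |s * x| = s * |x| := by
    intro s x hs; rw [abs_mul, abs_of_nonneg hs]
  have hkey : ∀ x : ℝ, ∀ t ∈ Metric.ball u (u / 2), ‖F' t x‖ ≤ B * (1 + |x|) ^ (k + 1) := by
    intro x t ht
    obtain ⟨ht1, ht2⟩ := hball t ht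
    have ht0 : 0 < t := lt_of_lt_of_le (by linarith) ht1
    have hst : 0 < Real.sqrt t := Real.sqrt_pos.2 ht0
    have hs1 : Real.sqrt (u / 2) ≤ Real.sqrt t := Real.sqrt_le_sqrt ht1
    have hs2 : Real.sqrt t ≤ Real.sqrt (2 * u) := Real.sqrt_le_sqrt (by linarith)
    have hder_b : |deriv f (Real.sqrt t * x)| ≤ C * (1 + Real.sqrt (2 * u)) ^ k * (1 + |x|) ^ k := by
      calc |deriv f (Real.sqrt t * x)| ≤ C * (1 + |Real.sqrt t * x|) ^ k := hfb' _
        _ = C * (1 + Real.sqrt t * |x|) ^ k := by rw [habs _ _ hst.le]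
        _ ≤ C * ((1 + Real.sqrt t) ^ k * (1 + |x|) ^ k) :=
            mul_le_mul_of_nonneg_left (growth_prod_aux hst.le (abs_nonneg x) k) hC.le
        _ ≤ C * ((1 + Real.sqrt (2 * u)) ^ k * (1 + |x|) ^ k) := by
            apply mul_le_mul_of_nonneg_left _ hC.le
            apply mul_le_mul_of_nonneg_right _ (by positivity)
            exact pow_le_pow_left₀ (by positivity) (by linarith) k
        _ = C * (1 + Real.sqrt (2 * u)) ^ k * (1 + |x|) ^ k := by ring
    have hfrac : |1 / (2 * Real.sqrt t) * x| ≤ 1 / (2 * Real.sqrt (u / 2)) * (1 + |x|) := by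
      rw [abs_mul, abs_of_nonneg (by positivity : (0:ℝ) ≤ 1 / (2 * Real.sqrt t))]
      apply mul_le_mul _ (by linarith [abs_nonneg x]) (abs_nonneg x) (by positivity)
      apply div_le_div_of_nonneg_left one_pos.le (by positivity)
      linarith
    rw [Real.norm_eq_abs, hF'def]
    calc |deriv f (Real.sqrt t * x) * (1 / (2 * Real.sqrt t) * x)|
        = |deriv f (Real.sqrt t * x)| * |1 / (2 * Real.sqrt t) * x| := abs_mul _ _
      _ ≤ (C * (1 + Real.sqrt (2 * u)) ^ k * (1 + |x|) ^ k) *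
          (1 / (2 * Real.sqrt (u / 2)) * (1 + |x|)) :=
          mul_le_mul hder_b hfrac (abs_nonneg _) (by positivity)
      _ = B * (1 + |x|) ^ (k + 1) := by rw [hB, pow_succ]; field_simp
  have hFcont : ∀ t : ℝ, Continuous fun x : ℝ => f (Real.sqrt t * x) := fun t =>
    hcont_f.comp (continuous_const.mul continuous_id)
  have hF'cont : Continuous (F' u) := by
    rw [hF'def]
    exact (hf'c.comp (continuous_const.mul continuous_id)).mul
      (continuous_const.mul continuous_id)
  have hgrow : ∀ (g : ℝ → ℝ), (∀ x, |g x| ≤ C * (1 + |x|) ^ k) → ∀ s : ℝ, 0 ≤ s → ∀ x : ℝ,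
      |g (s * x)| ≤ C * (1 + s) ^ k * (1 + |x|) ^ k := by
    intro g hg s hs x
    calc |g (s * x)| ≤ C * (1 + |s * x|) ^ k := hg _
      _ = C * (1 + s * |x|) ^ k := by rw [habs _ _ hs]
      _ ≤ C * ((1 + s) ^ k * (1 + |x|) ^ k) :=
          mul_le_mul_of_nonneg_left (growth_prod_aux hs (abs_nonneg x) k) hC.le
      _ = C * (1 + s) ^ k * (1 + |x|) ^ k := by ring
  have hFint : Integrable (fun x => f (Real.sqrt u * x)) (gaussianReal 0 1) :=
    integrable_of_growth (A := C * (1 + Real.sqrt u) ^ k) (n := k) (hFcont u)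
      (hgrow f hfb _ hsu.le)
  have hbound_int : Integrable (fun x => B * (1 + |x|) ^ (k + 1)) (gaussianReal 0 1) := by
    refine integrable_of_growth (A := B) (n := k + 1)
      (continuous_const.mul ((continuous_const.add continuous_abs).pow _)) fun x => ?_
    rw [abs_mul, abs_of_nonneg hB0, abs_of_nonneg (by positivity)]
  have hdiff : ∀ x : ℝ, ∀ t ∈ Metric.ball u (u / 2),
      HasDerivAt (fun s => f (Real.sqrt s * x)) (F' t x) t := by
    intro x t ht
    have ht0 : 0 < t := lt_of_lt_of_le (by linarith [(hball t ht).1]) (le_refl _)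
    have hs : HasDerivAt Real.sqrt (1 / (2 * Real.sqrt t)) t := Real.hasDerivAt_sqrt ht0.ne'
    have hmul : HasDerivAt (fun s => Real.sqrt s * x) (1 / (2 * Real.sqrt t) * x) t :=
      hs.mul_const x
    have hcomp := ((hf1 (Real.sqrt t * x)).hasDerivAt).comp t hmul
    exact hcomp
  have main := hasDerivAt_integral_of_dominated_loc_of_deriv_le
    (μ := gaussianReal 0 1) (F := fun t x => f (Real.sqrt t * x)) (F' := F') (x₀ := u)
    (bound := fun x => B * (1 + |x|) ^ (k + 1)) (Metric.ball_mem_nhds u (half_pos hu))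
    (Eventually.of_forall fun t => (hFcont t).aestronglyMeasurable)
    hFint hF'cont.aestronglyMeasurable
    (ae_of_all _ fun x t ht => hkey x t ht) hbound_int
    (ae_of_all _ fun x t ht => hdiff x t ht)
  have hstein : ∫ x, x * deriv f (Real.sqrt u * x) ∂(gaussianReal 0 1)
      = ∫ x, Real.sqrt u * deriv (deriv f) (Real.sqrt u * x) ∂(gaussianReal 0 1) := by
    refine stein (g' := fun y => Real.sqrt u * deriv (deriv f) (Real.sqrt u * y))
      (A := C * (1 + Real.sqrt u) ^ k * (1 + Real.sqrt u)) (n := k)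
      (fun y => ?_) (hf'c.comp (continuous_const.mul continuous_id))
      (continuous_const.mul (hf''c.comp (continuous_const.mul continuous_id)))
      (fun y => ?_) (fun y => ?_)
    · have hlin : HasDerivAt (fun y : ℝ => Real.sqrt u * y) (Real.sqrt u) y := by
        simpa using (hasDerivAt_id y).const_mul (Real.sqrt u)
      have hcomp := ((hf2 (Real.sqrt u * y)).hasDerivAt).comp y hlin
      refine hcomp.congr_deriv ?_
      ring
    · have h1 := hgrow (deriv f) hfb' _ hsu.le y
      have h2 : (0:ℝ) ≤ (1 + |y|) ^ k := by positivity
      have h3 : C * (1 + Real.sqrt u) ^ k ≤ C * (1 + Real.sqrt u) ^ k * (1 + Real.sqrt u) := by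
        nlinarith [mul_nonneg (mul_nonneg hC.le
          (pow_nonneg (by positivity : (0:ℝ) ≤ 1 + Real.sqrt u) k)) hsu.le]
      nlinarith [h1, mul_le_mul_of_nonneg_right h3 h2]
    · have h1 := hgrow (deriv (deriv f)) hfb'' _ hsu.le y
      rw [abs_mul, abs_of_nonneg hsu.le]
      have h2 : (0:ℝ) ≤ (1 + |y|) ^ k := by positivity
      have h4 := mul_le_mul_of_nonneg_left h1 hsu.le
      have h5 : Real.sqrt u * (C * (1 + Real.sqrt u) ^ k * (1 + |y|) ^ k)
          ≤ C * (1 + Real.sqrt u) ^ k * (1 + Real.sqrt u) * (1 + |y|) ^ k := by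
        nlinarith [mul_nonneg (mul_nonneg hC.le
          (pow_nonneg (by positivity : (0:ℝ) ≤ 1 + Real.sqrt u) k)) h2]
      linarith
  have hval : ∫ x, F' u x ∂(gaussianReal 0 1)
      = (1/2) * ∫ x, deriv (deriv f) (Real.sqrt u * x) ∂(gaussianReal 0 1) := by
    calc ∫ x, F' u x ∂(gaussianReal 0 1)
        = ∫ x, (1 / (2 * Real.sqrt u)) * (x * deriv f (Real.sqrt u * x)) ∂(gaussianReal 0 1) := by
          congr 1; funext x; rw [hF'def]; ring
      _ = (1 / (2 * Real.sqrt u)) * ∫ x, x * deriv f (Real.sqrt u * x) ∂(gaussianReal 0 1) :=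
          integral_const_mul _ _
      _ = (1 / (2 * Real.sqrt u)) *
          ∫ x, Real.sqrt u * deriv (deriv f) (Real.sqrt u * x) ∂(gaussianReal 0 1) := by
          rw [hstein]
      _ = (1 / (2 * Real.sqrt u)) * (Real.sqrt u *
          ∫ x, deriv (deriv f) (Real.sqrt u * x) ∂(gaussianReal 0 1)) := by
          rw [integral_const_mul]
      _ = (1/2) * ∫ x, deriv (deriv f) (Real.sqrt u * x) ∂(gaussianReal 0 1) := by
          field_simp
  have h2 := main.2
  rw [hval] at h2
  exact h2

end TauAux


set_option maxHeartbeats 1600000 in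
/-- Existence and uniqueness of the fixed point `τ*` (Lemma A.1): the map
`T(t) = σ_a² E[φ(√t ξ)²] + σ_b² τ₀²` is a `q`-contraction on `[0,∞)`, has a unique fixed
point `t* ≥ σ_b² τ₀² > 0` to which all iterates converge, and `τ* = √t*` is the unique
`τ > 0` satisfying `τ² = σ_a² E[φ(τξ)²] + σ_b² τ₀²`. -/
theorem tau_star_exists_unique
    (σa σb τ₀ : ℝ) (hσb : σb ≠ 0) (hτ₀ : 0 < τ₀)
    (φ f : ℝ → ℝ) (hfφ : ∀ x, f x = (φ x) ^ 2)
    (hf : ContDiff ℝ 2 f)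
    (C : ℝ) (k : ℕ) (hC : 0 < C)
    (hgrowth : ∀ x : ℝ, |f x| + |deriv f x| + |deriv (deriv f) x| ≤ C * (1 + |x|) ^ k)
    (q : ℝ) (hq0 : 0 ≤ q) (hq1 : q < 1)
    (hcontr : ∀ t : ℝ, 0 < t →
      σa ^ 2 / 2 * |∫ x, deriv (deriv f) (Real.sqrt t * x) ∂(gaussianReal 0 1)| ≤ q)
    (T : ℝ → ℝ)
    (hT : ∀ t, T t =
      σa ^ 2 * (∫ x, (φ (Real.sqrt t * x)) ^ 2 ∂(gaussianReal 0 1)) + σb ^ 2 * τ₀ ^ 2) :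
    (∀ s t : ℝ, 0 ≤ s → 0 ≤ t → |T s - T t| ≤ q * |s - t|) ∧
    ∃ tstar : ℝ, 0 ≤ tstar ∧ T tstar = tstar ∧
      (∀ t, 0 ≤ t → T t = t → t = tstar) ∧
      σb ^ 2 * τ₀ ^ 2 ≤ tstar ∧ 0 < σb ^ 2 * τ₀ ^ 2 ∧
      (∀ t₀ : ℝ, 0 ≤ t₀ → Tendsto (fun l => T^[l] t₀) atTop (nhds tstar)) ∧
      (0 < Real.sqrt tstar ∧
        (Real.sqrt tstar) ^ 2 =
          σa ^ 2 * (∫ x, (φ (Real.sqrt tstar * x)) ^ 2 ∂(gaussianReal 0 1)) +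
            σb ^ 2 * τ₀ ^ 2) ∧
      (∀ τ : ℝ, 0 < τ →
        τ ^ 2 = σa ^ 2 * (∫ x, (φ (τ * x)) ^ 2 ∂(gaussianReal 0 1)) + σb ^ 2 * τ₀ ^ 2 →
        τ = Real.sqrt tstar) := by
  classical
  -- smoothness consequences
  have hf' := hf
  rw [← one_add_one_eq_two, add_comm, contDiff_succ_iff_deriv] at hf'
  obtain ⟨hf1, -, hfd⟩ := hf'
  rw [show (1 : WithTop ℕ∞) = 0 + 1 from (zero_add 1).symm, contDiff_succ_iff_deriv] at hfd
  obtain ⟨hf2, -, hfd2⟩ := hfd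
  have hf'c : Continuous (deriv f) := hf2.continuous
  have hf''c : Continuous (deriv (deriv f)) := contDiff_zero.1 hfd2
  -- growth bounds
  have hfb : ∀ x, |f x| ≤ C * (1 + |x|) ^ k := fun x => by
    have h := hgrowth x
    have h1 := abs_nonneg (deriv f x); have h2 := abs_nonneg (deriv (deriv f) x); linarith
  have hfb' : ∀ x, |deriv f x| ≤ C * (1 + |x|) ^ k := fun x => by
    have h := hgrowth x
    have h1 := abs_nonneg (f x); have h2 := abs_nonneg (deriv (deriv f) x); linarith
  have hfb'' : ∀ x, |deriv (deriv f) x| ≤ C * (1 + |x|) ^ k := fun x => by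
    have h := hgrowth x
    have h1 := abs_nonneg (f x); have h2 := abs_nonneg (deriv f x); linarith
  have hTf : ∀ t, T t
      = σa ^ 2 * (∫ x, f (Real.sqrt t * x) ∂(gaussianReal 0 1)) + σb ^ 2 * τ₀ ^ 2 := by
    intro t; rw [hT t]; simp only [hfφ]
  -- derivative of T on positives
  have hTderiv : ∀ u : ℝ, 0 < u → HasDerivAt T
      (σa ^ 2 * ((1/2) * ∫ x, deriv (deriv f) (Real.sqrt u * x) ∂(gaussianReal 0 1))) u := by
    intro u hu
    have hG := TauAux.hasDerivAt_G hf1 hf'c hf2 hf''c hC hfb hfb' hfb'' hu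
    have h := (hG.const_mul (σa ^ 2)).add_const (σb ^ 2 * τ₀ ^ 2)
    have hTeq : T = fun t =>
        σa ^ 2 * (∫ x, f (Real.sqrt t * x) ∂(gaussianReal 0 1)) + σb ^ 2 * τ₀ ^ 2 := funext hTf
    rw [hTeq]
    exact h
  have hTbnd : ∀ u : ℝ, 0 < u →
      |σa ^ 2 * ((1/2) * ∫ x, deriv (deriv f) (Real.sqrt u * x) ∂(gaussianReal 0 1))| ≤ q := by
    intro u hu
    have h := hcontr u hu
    rw [abs_mul, abs_mul, abs_of_nonneg (sq_nonneg σa),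
      abs_of_nonneg (by norm_num : (0:ℝ) ≤ (1:ℝ)/2)]
    calc σa ^ 2 * (1/2 * |∫ x, deriv (deriv f) (Real.sqrt u * x) ∂(gaussianReal 0 1)|)
        = σa ^ 2 / 2 * |∫ x, deriv (deriv f) (Real.sqrt u * x) ∂(gaussianReal 0 1)| := by ring
      _ ≤ q := h
  -- contraction on positive reals
  have hcontr_pos : ∀ s t : ℝ, 0 < s → 0 < t → |T s - T t| ≤ q * |s - t| := by
    intro s t hs ht
    have h := Convex.norm_image_sub_le_of_norm_hasDerivWithin_le
      (f := T) (f' := fun u =>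
        σa ^ 2 * ((1/2) * ∫ x, deriv (deriv f) (Real.sqrt u * x) ∂(gaussianReal 0 1)))
      (s := Set.Ioi (0:ℝ))
      (fun u hu => (hTderiv u hu).hasDerivWithinAt)
      (fun u hu => by rw [Real.norm_eq_abs]; exact hTbnd u hu)
      (convex_Ioi 0) ht hs
    simpa [Real.norm_eq_abs] using h
  -- continuity at 0
  have hGcont : ContinuousAt
      (fun t => ∫ x, f (Real.sqrt t * x) ∂(gaussianReal 0 1)) 0 := by
    apply continuousAt_of_dominated (bound := fun x => C * (1 + |x|) ^ k)
    · exact Eventually.of_forall fun t =>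
        (hf1.continuous.comp (continuous_const.mul continuous_id)).aestronglyMeasurable
    · have hev : ∀ᶠ t in nhds (0:ℝ), t ∈ Set.Iio (1:ℝ) := Iio_mem_nhds (by norm_num)
      refine hev.mono fun t ht => ae_of_all _ fun x => ?_
      have hst : Real.sqrt t ≤ 1 := by
        calc Real.sqrt t ≤ Real.sqrt 1 := Real.sqrt_le_sqrt (le_of_lt ht)
          _ = 1 := Real.sqrt_one
      rw [Real.norm_eq_abs]
      calc |f (Real.sqrt t * x)| ≤ C * (1 + |Real.sqrt t * x|) ^ k := hfb _
        _ ≤ C * (1 + |x|) ^ k := by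
            apply mul_le_mul_of_nonneg_left _ hC.le
            apply pow_le_pow_left₀ (by positivity)
            have h1 : |Real.sqrt t * x| = Real.sqrt t * |x| := by
              rw [abs_mul, abs_of_nonneg (Real.sqrt_nonneg t)]
            rw [h1]
            nlinarith [abs_nonneg x, Real.sqrt_nonneg t]
    · refine TauAux.integrable_of_growth (A := C) (n := k)
        (continuous_const.mul ((continuous_const.add continuous_abs).pow _)) fun x => ?_
      rw [abs_mul, abs_of_nonneg hC.le, abs_of_nonneg (by positivity : (0:ℝ) ≤ (1 + |x|) ^ k)]
    · exact ae_of_all _ fun x =>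
        (hf1.continuous.comp (Real.continuous_sqrt.mul continuous_const)).continuousAt
  have hTcont0 : ContinuousAt T 0 := by
    have hTeq : T = fun t =>
        σa ^ 2 * (∫ x, f (Real.sqrt t * x) ∂(gaussianReal 0 1)) + σb ^ 2 * τ₀ ^ 2 := funext hTf
    rw [hTeq]
    exact (hGcont.const_mul _).add continuousAt_const
  -- full contraction property
  have hcontraction : ∀ s t : ℝ, 0 ≤ s → 0 ≤ t → |T s - T t| ≤ q * |s - t| := by
    have key0 : ∀ s : ℝ, 0 < s → |T s - T 0| ≤ q * |s - 0| := by
      intro s hs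
      have hseq : Tendsto (fun n : ℕ => 1 / ((n:ℝ) + 1)) atTop (nhds 0) :=
        tendsto_one_div_add_atTop_nhds_zero_nat
      have h1 : Tendsto (fun n : ℕ => |T s - T (1 / ((n:ℝ) + 1))|) atTop
          (nhds (|T s - T 0|)) :=
        (tendsto_const_nhds.sub (hTcont0.tendsto.comp hseq)).abs
      have h2 : Tendsto (fun n : ℕ => q * |s - 1 / ((n:ℝ) + 1)|) atTop
          (nhds (q * |s - 0|)) :=
        ((tendsto_const_nhds.sub hseq).abs).const_mul q
      refine le_of_tendsto_of_tendsto h1 h2 (Eventually.of_forall fun n => ?_)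
      exact hcontr_pos s _ hs (by positivity)
    intro s t hs ht
    rcases hs.eq_or_lt with rfl | hs'
    · rcases ht.eq_or_lt with rfl | ht'
      · simp
      · have h := key0 t ht'
        calc |T 0 - T t| = |T t - T 0| := abs_sub_comm _ _
          _ ≤ q * |t - 0| := h
          _ = q * |0 - t| := by rw [abs_sub_comm]
    · rcases ht.eq_or_lt with rfl | ht'
      · exact key0 s hs'
      · exact hcontr_pos s t hs' ht'
  -- basic positivity
  have hb2 : 0 < σb ^ 2 * τ₀ ^ 2 :=
    mul_pos (lt_of_le_of_ne (sq_nonneg σb) (Ne.symm (pow_ne_zero 2 hσb))) (pow_pos hτ₀ 2)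
  have hTge : ∀ t, σb ^ 2 * τ₀ ^ 2 ≤ T t := by
    intro t
    rw [hT t]
    have h := integral_nonneg (μ := gaussianReal 0 1)
      (f := fun x => (φ (Real.sqrt t * x)) ^ 2) (fun x => sq_nonneg _)
    nlinarith [sq_nonneg σa]
  -- fixed point via Banach
  haveI : CompleteSpace (Set.Ici (0:ℝ)) := isClosed_Ici.completeSpace_coe
  set T' : Set.Ici (0:ℝ) → Set.Ici (0:ℝ) :=
    fun x => ⟨T x.1, le_trans hb2.le (hTge x.1)⟩ with hT'def
  have hK : LipschitzWith ⟨q, hq0⟩ T' := LipschitzWith.of_dist_le_mul fun x y => by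
    simp only [Subtype.dist_eq, Real.dist_eq, NNReal.coe_mk]
    exact hcontraction x.1 y.1 x.2 y.2
  have hCW : ContractingWith ⟨q, hq0⟩ T' := ⟨by exact_mod_cast hq1, hK⟩
  set ts := ContractingWith.fixedPoint T' hCW with hts
  have hfix : T' ts = ts := hCW.fixedPoint_isFixedPt
  have hfixval : T ts.1 = ts.1 := congrArg Subtype.val hfix
  have huniq : ∀ t, 0 ≤ t → T t = t → t = ts.1 := by
    intro t ht hfixt
    have h1 : |t - ts.1| ≤ q * |t - ts.1| := by
      calc |t - ts.1| = |T t - T ts.1| := by rw [hfixt, hfixval]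
        _ ≤ q * |t - ts.1| := hcontraction t ts.1 ht ts.2
    have h2 : |t - ts.1| = 0 := by nlinarith [abs_nonneg (t - ts.1)]
    have := abs_eq_zero.1 h2
    linarith [sub_eq_zero.1 this]
  have hts_ge : σb ^ 2 * τ₀ ^ 2 ≤ ts.1 := by rw [← hfixval]; exact hTge ts.1
  have hts_pos : 0 < ts.1 := lt_of_lt_of_le hb2 hts_ge
  refine ⟨hcontraction, ts.1, ts.2, hfixval, huniq, hts_ge, hb2, ?_, ?_, ?_⟩
  · -- convergence of iterates
    intro t₀ ht₀
    have hit : ∀ l : ℕ, ((T'^[l] ⟨t₀, ht₀⟩ : Set.Ici (0:ℝ)) : ℝ) = T^[l] t₀ := by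
      intro l
      induction l with
      | zero => rfl
      | succ n ih =>
        rw [Function.iterate_succ_apply', Function.iterate_succ_apply']
        show T ((T'^[n] ⟨t₀, ht₀⟩ : Set.Ici (0:ℝ)) : ℝ) = T (T^[n] t₀)
        rw [ih]
    have ht := hCW.tendsto_iterate_fixedPoint ⟨t₀, ht₀⟩
    have hc := (continuous_subtype_val.tendsto ts).comp ht
    have heq : (fun l : ℕ => ((T'^[l] ⟨t₀, ht₀⟩ : Set.Ici (0:ℝ)) : ℝ)) = fun l => T^[l] t₀ :=
      funext hit
    rw [← heq]
    exact hc
  · refine ⟨Real.sqrt_pos.2 hts_pos, ?_⟩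
    rw [Real.sq_sqrt ts.2]
    have h := hT ts.1
    rw [hfixval] at h
    exact h
  · intro τ hτ hτeq
    have hsq : Real.sqrt (τ ^ 2) = τ := Real.sqrt_sq hτ.le
    have hfixτ : T (τ ^ 2) = τ ^ 2 := by rw [hT (τ ^ 2), hsq, ← hτeq]
    have h := huniq (τ ^ 2) (sq_nonneg τ) hfixτ
    rw [← h]
    exact (Real.sqrt_sq hτ.le).symm
end

section
/- Let τ > 0, let a ≥ b ≥ 0 be real numbers, and define σ : ℝ → ℝ by σ(x) = max(a x, b x) − (a − b) τ / √(2π). Then E[σ(τ ξ)] = 0 and E[σ(τ ξ)²] = ((a² + b²)(π − 1) + 2ab) τ² / (2π). -/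
open MeasureTheory ProbabilityTheory
open Real Set Filter Topology
open scoped ENNReal NNReal


noncomputable def e (x : ℝ) : ℝ := Real.exp (-(2⁻¹) * x ^ 2)

lemma e_cont : Continuous e := by unfold e; continuity

lemma e_int : Integrable e := integrable_exp_neg_mul_sq (by norm_num)

lemma xe_int : Integrable (fun x => x * e x) := integrable_mul_exp_neg_mul_sq (by norm_num)

lemma abs_xe_int : Integrable (fun x => |x| * e x) := by
  have := xe_int.abs
  refine this.congr (Eventually.of_forall fun x => ?_)
  simp [e, abs_mul, abs_of_nonneg (Real.exp_nonneg _)]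

lemma sqe_int : Integrable (fun x => x ^ 2 * e x) := by
  have h := integrable_rpow_mul_exp_neg_mul_sq (b := 2⁻¹) (by norm_num) (s := 2) (by norm_num)
  refine h.congr (Eventually.of_forall fun x => ?_)
  have : (x : ℝ) ^ (2:ℝ) = x ^ (2:ℕ) := by
    rw [show ((2:ℝ)) = ((2:ℕ):ℝ) by norm_num, Real.rpow_natCast]
  simp only [e]
  norm_num [this]

lemma e_Ioi : ∫ x in Ioi (0:ℝ), e x = Real.sqrt (2 * π) / 2 := by
  have := integral_gaussian_Ioi 2⁻¹
  simp only [e]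
  rw [this]
  rw [show π / 2⁻¹ = 2 * π by ring]

lemma e_full : ∫ x, e x = Real.sqrt (2 * π) := by
  have := integral_gaussian 2⁻¹
  simp only [e]
  rw [this, show π / 2⁻¹ = 2 * π by ring]

lemma xe_Ioi : ∫ x in Ioi (0:ℝ), x * e x = 1 := by
  have hderiv : ∀ x ∈ Ioi (0:ℝ), HasDerivAt (fun y => -e y) (x * e x) x := by
    intro x _
    have h : HasDerivAt (fun y : ℝ => -(2⁻¹) * y ^ 2) (-(2⁻¹) * (2 * x)) x := by
      simpa using ((hasDerivAt_pow 2 x).const_mul (-(2⁻¹):ℝ))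
    have : HasDerivAt (fun y => -e y) (-(rexp (-(2⁻¹) * x ^ 2) * (-(2⁻¹) * (2 * x)))) x :=
      (h.exp).neg
    convert this using 1
    simp only [e]
    ring_nf
  have htend : Tendsto (fun y => -e y) atTop (nhds 0) := by
    rw [show (0:ℝ) = -0 by norm_num]
    apply Tendsto.neg
    have : Tendsto (fun y : ℝ => -(2⁻¹) * y ^ 2) atTop atBot := by
      apply Tendsto.const_mul_atTop_of_neg (by norm_num)
      exact tendsto_pow_atTop (by norm_num)
    exact Real.tendsto_exp_atBot.comp this
  have := integral_Ioi_of_hasDerivAt_of_tendsto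
    (e_cont.neg.continuousWithinAt) hderiv xe_int.integrableOn htend
  simp [e] at this ⊢
  linarith [this]

lemma abse_tendsto : Tendsto (fun y : ℝ => y * e y) atTop (nhds 0) := by
  have h := tendsto_rpow_abs_mul_exp_neg_mul_sq_cocompact (a := 2⁻¹) (by norm_num) 1
  have h2 : Tendsto (fun x : ℝ => |x| ^ (1:ℝ) * rexp (-2⁻¹ * x ^ 2)) atTop (nhds 0) :=
    h.mono_left _root_.atTop_le_cocompact
  refine h2.congr' ?_
  filter_upwards [eventually_ge_atTop (0:ℝ)] with x hx
  simp [e, Real.rpow_one, abs_of_nonneg hx]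

lemma sqe_Ioi : ∫ x in Ioi (0:ℝ), x ^ 2 * e x = Real.sqrt (2 * π) / 2 := by
  have hderiv : ∀ x ∈ Ioi (0:ℝ), HasDerivAt (fun y => -(y * e y)) (x ^ 2 * e x - e x) x := by
    intro x _
    have h1 : HasDerivAt (fun y : ℝ => -(2⁻¹) * y ^ 2) (-(2⁻¹) * (2 * x)) x := by
      simpa using ((hasDerivAt_pow 2 x).const_mul (-(2⁻¹):ℝ))
    have h2 : HasDerivAt e (Real.exp (-(2⁻¹) * x ^ 2) * (-(2⁻¹) * (2 * x))) x := h1.exp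
    have : HasDerivAt (fun y => -(y * e y))
        (-(1 * e x + x * (Real.exp (-(2⁻¹) * x ^ 2) * (-(2⁻¹) * (2 * x))))) x :=
      ((hasDerivAt_id x).mul h2).neg
    convert this using 1
    simp only [e, id]
    ring_nf
  have htend : Tendsto (fun y => -(y * e y)) atTop (nhds 0) := by
    rw [show (0:ℝ) = -0 by norm_num]
    exact abse_tendsto.neg
  have key := integral_Ioi_of_hasDerivAt_of_tendsto
    ((continuous_id.mul e_cont).neg.continuousWithinAt) hderiv
    ((sqe_int.sub e_int).integrableOn) htend
  have h2 : ∫ x in Ioi (0:ℝ), (x ^ 2 * e x - e x)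
        = (∫ x in Ioi (0:ℝ), x ^ 2 * e x) - ∫ x in Ioi (0:ℝ), e x :=
      integral_sub sqe_int.integrableOn e_int.integrableOn
  have h3 := e_Ioi
  simp at key
  rw [key] at h2
  linarith

lemma gauss_int (f : ℝ → ℝ) :
    ∫ x, f x ∂(gaussianReal 0 1) = ∫ x, gaussianPDFReal 0 1 x * f x := by
  rw [gaussianReal_of_var_ne_zero 0 one_ne_zero]
  rw [show gaussianPDF 0 1 = fun x => ((gaussianPDFReal 0 1 x).toNNReal : ℝ≥0∞) from rfl]
  rw [integral_withDensity_eq_integral_smul ((measurable_gaussianPDFReal 0 1).real_toNNReal) f]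
  congr 1 with x
  simp [NNReal.smul_def, Real.coe_toNNReal _ (gaussianPDFReal_nonneg 0 1 x)]

lemma pdf_eq (x : ℝ) : gaussianPDFReal 0 1 x = (Real.sqrt (2 * π))⁻¹ * e x := by
  simp only [gaussianPDFReal, e, NNReal.coe_one, mul_one, sub_zero]
  congr 2
  ring

lemma quad_Ioi (A B C : ℝ) :
    ∫ x in Ioi (0:ℝ), e x * (A * x ^ 2 + B * x + C)
      = A * (Real.sqrt (2 * π) / 2) + B + C * (Real.sqrt (2 * π) / 2) := by
  have h : ∀ x : ℝ, e x * (A * x ^ 2 + B * x + C)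
      = A * (x ^ 2 * e x) + B * (x * e x) + C * e x := fun x => by ring
  simp only [h]
  have i1 : IntegrableOn (fun x : ℝ => A * (x ^ 2 * e x)) (Ioi 0) :=
    (sqe_int.const_mul A).integrableOn
  have i2 : IntegrableOn (fun x : ℝ => B * (x * e x)) (Ioi 0) :=
    (xe_int.const_mul B).integrableOn
  have i3 : IntegrableOn (fun x : ℝ => C * e x) (Ioi 0) :=
    (e_int.const_mul C).integrableOn
  have i12 : IntegrableOn (fun x : ℝ => A * (x ^ 2 * e x) + B * (x * e x)) (Ioi 0) := i1.add i2
  rw [integral_add i12 i3, integral_add i1 i2,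
      integral_const_mul, integral_const_mul, integral_const_mul, sqe_Ioi, xe_Ioi, e_Ioi]
  ring

lemma lin_Ioi (A B : ℝ) :
    ∫ x in Ioi (0:ℝ), e x * (A * x + B) = A + B * (Real.sqrt (2 * π) / 2) := by
  have := quad_Ioi 0 A B
  simpa using this

lemma e_neg (x : ℝ) : e (-x) = e x := by simp [e]

/-- Gaussian moments of the centered Leaky-ReLU activation
`σ(x) = max(ax, bx) − (a − b)τ/√(2π)` of Example 3.11: `E[σ(τξ)] = 0` and
`E[σ(τξ)²] = ((a² + b²)(π − 1) + 2ab)τ²/(2π)` for `ξ ~ N(0,1)`. -/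
theorem centered_leaky_relu_gaussian_moments
    (τ : ℝ) (hτ : 0 < τ) (a b : ℝ) (hab : b ≤ a) (hb : 0 ≤ b)
    (σ : ℝ → ℝ)
    (hσ : ∀ x, σ x = max (a * x) (b * x) - (a - b) * τ / Real.sqrt (2 * Real.pi)) :
    (∫ x, σ (τ * x) ∂(gaussianReal 0 1)) = 0 ∧
    (∫ x, (σ (τ * x)) ^ 2 ∂(gaussianReal 0 1)) =
      ((a ^ 2 + b ^ 2) * (Real.pi - 1) + 2 * a * b) * τ ^ 2 / (2 * Real.pi) := by
  have ha : 0 ≤ a := hb.trans hab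
  set s : ℝ := Real.sqrt (2 * π) with hsdef
  have hs : 0 < s := Real.sqrt_pos.mpr (by positivity)
  have hs2 : s ^ 2 = 2 * π := Real.sq_sqrt (by positivity)
  set c : ℝ := (a - b) * τ / s with hc
  have hcpos : 0 ≤ c := by
    apply div_nonneg _ hs.le
    have : 0 ≤ a - b := by linarith
    positivity
  -- pointwise evaluation of the max
  have hmax_pos : ∀ x : ℝ, 0 ≤ x → max (a * (τ * x)) (b * (τ * x)) = a * (τ * x) := by
    intro x hx
    exact max_eq_left (mul_le_mul_of_nonneg_right hab (by positivity))
  have hmax_neg : ∀ x : ℝ, x ≤ 0 → max (a * (τ * x)) (b * (τ * x)) = b * (τ * x) := by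
    intro x hx
    exact max_eq_right (mul_le_mul_of_nonpos_right hab (by nlinarith))
  -- uniform bound
  have habs : ∀ x : ℝ, |max (a * (τ * x)) (b * (τ * x)) - c| ≤ a * τ * |x| + c := by
    intro x
    have h1 : |max (a * (τ * x)) (b * (τ * x))| ≤ a * τ * |x| := by
      have hu : |a * (τ * x)| = a * τ * |x| := by
        rw [abs_mul, abs_mul, abs_of_nonneg ha, abs_of_nonneg hτ.le]; ring
      have hv : |b * (τ * x)| ≤ a * τ * |x| := by
        rw [abs_mul, abs_mul, abs_of_nonneg hb, abs_of_nonneg hτ.le]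
        have : b * (τ * |x|) ≤ a * (τ * |x|) :=
          mul_le_mul_of_nonneg_right hab (by positivity)
        calc b * (τ * |x|) ≤ a * (τ * |x|) := this
          _ = a * τ * |x| := by ring
      rw [abs_le]
      constructor
      · calc -(a * τ * |x|) = -|a * (τ * x)| := by rw [hu]
          _ ≤ a * (τ * x) := neg_abs_le _
          _ ≤ _ := le_max_left _ _
      · apply max_le
        · rw [← hu]; exact le_abs_self _
        · exact (le_abs_self _).trans hv
    calc |max (a * (τ * x)) (b * (τ * x)) - c|
        ≤ |max (a * (τ * x)) (b * (τ * x))| + |c| := abs_sub _ _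
      _ ≤ a * τ * |x| + c := by rw [abs_of_nonneg hcpos]; exact add_le_add h1 le_rfl
  -- integrability of the two integrands
  have g1_int : Integrable (fun x => s⁻¹ * e x * (max (a * (τ * x)) (b * (τ * x)) - c)) := by
    have hBint : Integrable (fun x => s⁻¹ * ((a * τ) * (|x| * e x) + c * e x)) :=
      ((abs_xe_int.const_mul (a * τ)).add (e_int.const_mul c)).const_mul _
    refine hBint.mono ?_ (Eventually.of_forall fun x => ?_)
    · apply Continuous.aestronglyMeasurable
      exact (continuous_const.mul e_cont).mul
        (((continuous_const.mul (continuous_const.mul continuous_id)).max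
          (continuous_const.mul (continuous_const.mul continuous_id))).sub continuous_const)
    · have he : 0 ≤ e x := Real.exp_nonneg _
      have h := habs x
      rw [Real.norm_eq_abs, Real.norm_eq_abs, abs_mul, abs_mul, abs_of_nonneg (inv_nonneg.mpr hs.le),
        abs_of_nonneg he]
      have hB : |s⁻¹ * ((a * τ) * (|x| * e x) + c * e x)|
          = s⁻¹ * ((a * τ) * (|x| * e x) + c * e x) := by
        apply abs_of_nonneg; positivity
      rw [hB]
      have : e x * |max (a * (τ * x)) (b * (τ * x)) - c| ≤ e x * (a * τ * |x| + c) :=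
        mul_le_mul_of_nonneg_left h he
      calc s⁻¹ * e x * |max (a * (τ * x)) (b * (τ * x)) - c|
          ≤ s⁻¹ * (e x * (a * τ * |x| + c)) := by
            rw [mul_assoc]; exact mul_le_mul_of_nonneg_left this (by positivity)
        _ = s⁻¹ * ((a * τ) * (|x| * e x) + c * e x) := by ring
  have g2_int : Integrable (fun x => s⁻¹ * e x * (max (a * (τ * x)) (b * (τ * x)) - c) ^ 2) := by
    have hBint : Integrable (fun x =>
        s⁻¹ * ((a * τ) ^ 2 * (x ^ 2 * e x) + (2 * (a * τ) * c) * (|x| * e x) + c ^ 2 * e x)) :=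
      (((sqe_int.const_mul _).add (abs_xe_int.const_mul _)).add (e_int.const_mul _)).const_mul _
    refine hBint.mono ?_ (Eventually.of_forall fun x => ?_)
    · apply Continuous.aestronglyMeasurable
      exact (continuous_const.mul e_cont).mul
        ((((continuous_const.mul (continuous_const.mul continuous_id)).max
          (continuous_const.mul (continuous_const.mul continuous_id))).sub continuous_const).pow 2)
    · have he : 0 ≤ e x := Real.exp_nonneg _
      have h := habs x
      have hsq : (max (a * (τ * x)) (b * (τ * x)) - c) ^ 2 ≤ (a * τ * |x| + c) ^ 2 := by
        rw [← sq_abs]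
        exact pow_le_pow_left₀ (abs_nonneg _) h 2
      rw [Real.norm_eq_abs, Real.norm_eq_abs, abs_mul, abs_mul,
        abs_of_nonneg (inv_nonneg.mpr hs.le), abs_of_nonneg he, abs_of_nonneg (sq_nonneg _)]
      have hB : |s⁻¹ * ((a * τ) ^ 2 * (x ^ 2 * e x) + (2 * (a * τ) * c) * (|x| * e x) + c ^ 2 * e x)|
          = s⁻¹ * ((a * τ) ^ 2 * (x ^ 2 * e x) + (2 * (a * τ) * c) * (|x| * e x) + c ^ 2 * e x) := by
        apply abs_of_nonneg; positivity
      rw [hB]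
      have h2 : e x * (max (a * (τ * x)) (b * (τ * x)) - c) ^ 2
          ≤ e x * (a * τ * |x| + c) ^ 2 := mul_le_mul_of_nonneg_left hsq he
      calc s⁻¹ * e x * (max (a * (τ * x)) (b * (τ * x)) - c) ^ 2
          ≤ s⁻¹ * (e x * (a * τ * |x| + c) ^ 2) := by
            rw [mul_assoc]; exact mul_le_mul_of_nonneg_left h2 (by positivity)
        _ = s⁻¹ * ((a * τ) ^ 2 * (x ^ 2 * e x) + (2 * (a * τ) * c) * (|x| * e x) + c ^ 2 * e x) := by
            rw [← sq_abs x]; ring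
  constructor
  · rw [gauss_int]
    have heq : (fun x => gaussianPDFReal 0 1 x * σ (τ * x))
        = fun x => s⁻¹ * e x * (max (a * (τ * x)) (b * (τ * x)) - c) := by
      funext x
      rw [pdf_eq, hσ]
    rw [heq]
    rw [← intervalIntegral.integral_Iic_add_Ioi (b := 0) g1_int.integrableOn g1_int.integrableOn]
    have hIoi : ∫ x in Ioi (0:ℝ), s⁻¹ * e x * (max (a * (τ * x)) (b * (τ * x)) - c)
        = s⁻¹ * (a * τ + (-c) * (s / 2)) := by
      rw [setIntegral_congr_fun measurableSet_Ioi
        (g := fun x => s⁻¹ * (e x * ((a * τ) * x + (-c))))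
        (fun x hx => by rw [hmax_pos x (le_of_lt hx)]; ring)]
      rw [integral_const_mul, lin_Ioi]
    have hIic : ∫ x in Iic (0:ℝ), s⁻¹ * e x * (max (a * (τ * x)) (b * (τ * x)) - c)
        = s⁻¹ * (-(b * τ) + (-c) * (s / 2)) := by
      rw [setIntegral_congr_fun measurableSet_Iic
        (g := fun x => (fun y => s⁻¹ * (e y * ((-(b * τ)) * y + (-c)))) (-x))
        (fun x hx => by simp only [e_neg]; rw [hmax_neg x hx]; ring)]
      have hcn := integral_comp_neg_Iic (0:ℝ) (fun y => s⁻¹ * (e y * ((-(b * τ)) * y + (-c))))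
      rw [neg_zero] at hcn
      rw [hcn, integral_const_mul, lin_Ioi]
    rw [hIoi, hIic, hc]
    field_simp
    ring
  · rw [gauss_int]
    have heq : (fun x => gaussianPDFReal 0 1 x * σ (τ * x) ^ 2)
        = fun x => s⁻¹ * e x * (max (a * (τ * x)) (b * (τ * x)) - c) ^ 2 := by
      funext x
      rw [pdf_eq, hσ]
    rw [heq]
    rw [← intervalIntegral.integral_Iic_add_Ioi (b := 0) g2_int.integrableOn g2_int.integrableOn]
    have hIoi : ∫ x in Ioi (0:ℝ), s⁻¹ * e x * (max (a * (τ * x)) (b * (τ * x)) - c) ^ 2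
        = s⁻¹ * ((a * τ) ^ 2 * (s / 2) + (-(2 * a * τ * c)) + c ^ 2 * (s / 2)) := by
      rw [setIntegral_congr_fun measurableSet_Ioi
        (g := fun x => s⁻¹ * (e x * ((a * τ) ^ 2 * x ^ 2 + (-(2 * a * τ * c)) * x + c ^ 2)))
        (fun x hx => by rw [hmax_pos x (le_of_lt hx)]; ring)]
      rw [integral_const_mul, quad_Ioi]
    have hIic : ∫ x in Iic (0:ℝ), s⁻¹ * e x * (max (a * (τ * x)) (b * (τ * x)) - c) ^ 2
        = s⁻¹ * ((b * τ) ^ 2 * (s / 2) + (2 * b * τ * c) + c ^ 2 * (s / 2)) := by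
      rw [setIntegral_congr_fun measurableSet_Iic
        (g := fun x => (fun y =>
          s⁻¹ * (e y * ((b * τ) ^ 2 * y ^ 2 + (2 * b * τ * c) * y + c ^ 2))) (-x))
        (fun x hx => by simp only [e_neg]; rw [hmax_neg x hx]; ring_nf)]
      have hcn := integral_comp_neg_Iic (0:ℝ) (fun y =>
        s⁻¹ * (e y * ((b * τ) ^ 2 * y ^ 2 + (2 * b * τ * c) * y + c ^ 2)))
      rw [neg_zero] at hcn
      rw [hcn, integral_const_mul, quad_Ioi]
    rw [hIoi, hIic]
    have key : s⁻¹ * ((b * τ) ^ 2 * (s / 2) + (2 * b * τ * c) + c ^ 2 * (s / 2))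
        + s⁻¹ * ((a * τ) ^ 2 * (s / 2) + (-(2 * a * τ * c)) + c ^ 2 * (s / 2))
        = (a ^ 2 + b ^ 2) * τ ^ 2 / 2 - c ^ 2 := by
      rw [hc]
      field_simp
      ring
    rw [key, hc, div_pow, hs2]
    field_simp
    ring
end
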